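/- Let G be a non-bipartite graph whose smallest induced odd cycle has length 2n+1 and let C be such a cycle with m_C the product of its vertices. Then m_C ∉ I(G)^{n+1} but x·m_C ∈ I(G)^{n+1} for every vertex x in N_G(V(C)). -/

import Mathlib

open MvPolynomial

noncomputable section

/-- The integral closure of an ideal `I`: an element `r` belongs to it iff `r·t` is
integral over the Rees algebra `R[It]` inside `R[t]`; equivalently, `r` satisfies an
equation `r^n + a₁ r^{n-1} + ⋯ + aₙ = 0` with `aᵢ ∈ Iⁱ`. -/
def Ideal.intCl {R : Type*} [CommRing R] (I : Ideal R) : Ideal R where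
  carrier := {r | (Polynomial.C r * Polynomial.X : Polynomial R) ∈
      integralClosure (reesAlgebra I) (Polynomial R)}
  zero_mem' := by
    simp only [Set.mem_setOf_eq, map_zero, zero_mul]
    exact Subalgebra.zero_mem _
  add_mem' := by
    intro a b ha hb
    simp only [Set.mem_setOf_eq, map_add, add_mul] at ha hb ⊢
    exact Subalgebra.add_mem _ ha hb
  smul_mem' := by
    intro c x hx
    simp only [Set.mem_setOf_eq] at hx ⊢
    have hmem : (Polynomial.C c : Polynomial R) ∈ reesAlgebra I := by
      rw [← Polynomial.algebraMap_eq]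
      exact Subalgebra.algebraMap_mem _ c
    have hc : (Polynomial.C c : Polynomial R) ∈
        integralClosure (reesAlgebra I) (Polynomial R) := by
      simpa using Subalgebra.algebraMap_mem
        (integralClosure (reesAlgebra I) (Polynomial R)) (⟨Polynomial.C c, hmem⟩ : reesAlgebra I)
    have heq : Polynomial.C (c • x) * Polynomial.X
        = Polynomial.C c * (Polynomial.C x * Polynomial.X) := by
      rw [smul_eq_mul, Polynomial.C_mul, mul_assoc]
    rw [heq]
    exact mul_mem hc hx

/-- The `s`-th symbolic power of an ideal, as the intersection of the `s`-th powers of its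
minimal primes (the appropriate definition for radical, e.g. squarefree monomial, ideals). -/
def Ideal.symbPow {R : Type*} [CommRing R] (I : Ideal R) (s : ℕ) : Ideal R :=
  ⨅ p ∈ I.minimalPrimes, p ^ s

section Koszul

variable (k : Type*) [Field k] (σ : Type*) [Fintype σ] [LinearOrder σ]

/-- The Koszul differential (on the Koszul complex of the variables, with coefficients in
the polynomial ring). -/
def koszulD : ∀ i : ℕ,
    (({s : Finset σ // s.card = i} → MvPolynomial σ k) →ₗ[k]
      ({s : Finset σ // s.card = i - 1} → MvPolynomial σ k))
  | 0 => 0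
  | (i + 1) =>
    LinearMap.pi fun t : {s : Finset σ // s.card = i} =>
      ∑ x ∈ (t.1ᶜ).attach,
        ((-1 : k) ^ ((t.1.filter (fun a => a < x.1)).card)) •
          ((LinearMap.mulLeft k (X x.1 : MvPolynomial σ k)).comp
            (LinearMap.proj (⟨insert x.1 t.1, by
              rw [Finset.card_insert_of_notMem (Finset.mem_compl.mp x.2), t.2]⟩ :
                {s : Finset σ // s.card = i + 1})))

variable {k σ}

/-- The degree `j` strand of homological degree `i` of the Koszul complex with coefficients
in the ideal `I`. -/
def koszulStrand (I : Ideal (MvPolynomial σ k)) (i j : ℕ) :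
    Submodule k ({s : Finset σ // s.card = i} → MvPolynomial σ k) :=
  if i ≤ j then
    Submodule.pi Set.univ fun _ =>
      (Submodule.restrictScalars k (I : Submodule (MvPolynomial σ k) (MvPolynomial σ k))) ⊓
        homogeneousSubmodule σ k (j - i)
  else ⊥

/-- The degree `j` cycles in homological degree `i` of the Koszul complex with values in `I`. -/
def koszulCycles (I : Ideal (MvPolynomial σ k)) (i j : ℕ) :
    Submodule k ({s : Finset σ // s.card = i} → MvPolynomial σ k) :=
  koszulStrand I i j ⊓ LinearMap.ker (koszulD k σ i)

/-- The graded Betti number `β_{i,j}(I) = dim_k (Tor_i(I,k))_j`, computed via the Koszul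
complex. -/
def gradedBetti (I : Ideal (MvPolynomial σ k)) (i j : ℕ) : Cardinal :=
  Module.rank k
    ((↥(koszulCycles I i j)) ⧸
      (Submodule.comap (koszulCycles I i j).subtype
        (Submodule.map (koszulD k σ (i + 1)) (koszulStrand I (i + 1) j))))

/-- The Castelnuovo–Mumford regularity of an ideal: `max { j - i : β_{i,j}(I) ≠ 0 }`. -/
def reg (I : Ideal (MvPolynomial σ k)) : ℤ :=
  sSup {d : ℤ | ∃ i j : ℕ, gradedBetti I i j ≠ 0 ∧ d = (j : ℤ) - (i : ℤ)}

end Koszul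

section Graphs

variable (k : Type*) [Field k] {V : Type*}

/-- The edge ideal of a graph. -/
def edgeIdeal (G : SimpleGraph V) : Ideal (MvPolynomial V k) :=
  Ideal.span {p | ∃ u v, G.Adj u v ∧ p = X u * X v}

/-- The edge ideal of the induced subgraph of `G` on a set `S` of vertices. -/
def edgeIdealOn (G : SimpleGraph V) (S : Set V) : Ideal (MvPolynomial V k) :=
  Ideal.span {p | ∃ u v, G.Adj u v ∧ u ∈ S ∧ v ∈ S ∧ p = X u * X v}

variable {k}

/-- A cycle of length `m` in `G`, given by an injective map from `ZMod m` whose consecutive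
values are adjacent. -/
def IsCycleMap (G : SimpleGraph V) (m : ℕ) (c : ZMod m → V) : Prop :=
  Function.Injective c ∧ ∀ i, G.Adj (c i) (c (i + 1))

/-- An induced cycle: a cycle with no chords. -/
def IsInducedCycleMap (G : SimpleGraph V) (m : ℕ) (c : ZMod m → V) : Prop :=
  IsCycleMap G m c ∧ ∀ i j : ZMod m, G.Adj (c i) (c j) → j = i + 1 ∨ i = j + 1

/-- A bow in `G`: two (odd) cycles which are vertex-disjoint and at distance at least two
(no edge between them). -/
def IsBow (G : SimpleGraph V) {p q : ℕ} (c₁ : ZMod p → V) (c₂ : ZMod q → V) : Prop :=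
  IsCycleMap G p c₁ ∧ IsCycleMap G q c₂ ∧ (∀ i j, c₁ i ≠ c₂ j) ∧
    ∀ i j, ¬ G.Adj (c₁ i) (c₂ j)

/-- The induced matching number of the induced subgraph of `G` on the vertex set `S`. -/
def inducedMatchingNumber (G : SimpleGraph V) (S : Set V) : ℕ :=
  sSup {r | ∃ M : Finset (V × V), M.card = r ∧
    (∀ e ∈ M, e.1 ∈ S ∧ e.2 ∈ S ∧ G.Adj e.1 e.2) ∧
    ∀ e ∈ M, ∀ f ∈ M, e ≠ f →
      ∀ u ∈ ({e.1, e.2} : Set V), ∀ w ∈ ({f.1, f.2} : Set V), u ≠ w ∧ ¬ G.Adj u w}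

/-- The vertex cover number of a graph. -/
def coverNumber [Fintype V] (G : SimpleGraph V) : ℕ :=
  sInf {r | ∃ C : Finset V, C.card = r ∧ ∀ u v, G.Adj u v → u ∈ C ∨ v ∈ C}

/-- The parallelization `G^v` of a graph `G`: the vertex `i` is deleted when `v i = 0` and
duplicated `v i - 1` times when `v i ≥ 1`. -/
def parallelization (G : SimpleGraph V) (v : V → ℕ) : SimpleGraph ((i : V) × Fin (v i)) where
  Adj a b := G.Adj a.1 b.1
  symm := ⟨fun _ _ h => G.adj_symm h⟩
  loopless := ⟨fun a h => G.irrefl h⟩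

end Graphs

/-!
Every element of `I(G)^(n+1)` has all its monomials of degree at least `2n+2`, while `m_C` has
degree `2n+1`. Conversely, if `x` is adjacent to `c i`, then
`x·m_C = (x·c_i)(c_{i+1}c_{i+2})⋯(c_{i+2n-1}c_{i+2n})` is a product of `n+1` edges.
-/

namespace MvPolynomial

variable {σ R : Type*} [CommSemiring R] [Nontrivial R]

theorem prod_X_mem_pow_idealOfVars_iff {ι : Type*} (s : Finset ι) (f : ι → σ) (d : ℕ) :
    ∏ i ∈ s, (X (f i) : MvPolynomial σ R) ∈ idealOfVars σ R ^ d ↔ d ≤ s.card := by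
  simp only [X, ← monomial_sum_one, monomial_mem_pow_idealOfVars_iff d _ one_ne_zero, map_sum,
    Finsupp.degree_single, Finset.sum_const, smul_eq_mul, mul_one]

end MvPolynomial

theorem ZMod.prod_univ_eq_prod_range_add {M : Type*} [CommMonoid M] {N : ℕ} [NeZero N]
    (g : ZMod N → M) (i : ZMod N) : ∏ j, g j = ∏ t ∈ Finset.range N, g (i + t) := by
  have hinj : Function.Injective fun t : Fin N => i + ((t : ℕ) : ZMod N) := by
    intro a b hab
    have := congrArg ZMod.val (add_left_cancel hab)
    rwa [ZMod.val_cast_of_lt a.2, ZMod.val_cast_of_lt b.2, Fin.val_inj] at this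
  rw [Finset.prod_range (fun t => g (i + t))]
  exact (Fintype.prod_bijective _ ((Fintype.bijective_iff_injective_and_card _).2
    ⟨hinj, by simp⟩) _ g fun _ => rfl).symm

section EdgeIdeal

open MvPolynomial

variable {k : Type*} [Field k] {V : Type*} (G : SimpleGraph V)

theorem X_mul_X_mem_edgeIdeal {u v : V} (h : G.Adj u v) :
    (X u * X v : MvPolynomial V k) ∈ edgeIdeal k G :=
  Ideal.subset_span ⟨u, v, h, rfl⟩

theorem edgeIdeal_le_idealOfVars_sq : edgeIdeal k G ≤ idealOfVars V k ^ 2 := by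
  rw [edgeIdeal, Ideal.span_le]
  rintro _ ⟨u, v, -, rfl⟩
  rw [pow_two]
  exact Ideal.mul_mem_mul (Ideal.subset_span ⟨u, rfl⟩) (Ideal.subset_span ⟨v, rfl⟩)

theorem edgeIdeal_pow_le_idealOfVars_pow (s : ℕ) :
    edgeIdeal k G ^ s ≤ idealOfVars V k ^ (2 * s) := by
  rw [pow_mul]
  exact Ideal.pow_right_mono (edgeIdeal_le_idealOfVars_sq G) s

theorem prod_X_notMem_edgeIdeal_pow {ι : Type*} (s : Finset ι) (f : ι → V) {d : ℕ}
    (hd : s.card < 2 * d) : ∏ i ∈ s, (X (f i) : MvPolynomial V k) ∉ edgeIdeal k G ^ d := by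
  intro h
  have := (prod_X_mem_pow_idealOfVars_iff s f _).1 (edgeIdeal_pow_le_idealOfVars_pow G d h)
  omega

theorem prod_X_walk_mem_edgeIdeal_pow {f : ℕ → V} (hf : ∀ j, G.Adj (f j) (f (j + 1))) (m : ℕ) :
    ∏ j ∈ Finset.range (2 * m), (X (f j) : MvPolynomial V k) ∈ edgeIdeal k G ^ m := by
  induction m with
  | zero => simp
  | succ m ih =>
    rw [show 2 * (m + 1) = 2 * m + 1 + 1 by ring, Finset.prod_range_succ, Finset.prod_range_succ,
      mul_assoc, pow_succ]
    exact Ideal.mul_mem_mul ih (X_mul_X_mem_edgeIdeal G (hf _))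

theorem X_mul_prod_X_cycle_mem_edgeIdeal_pow {n : ℕ} {c : ZMod (2 * n + 1) → V}
    (hc : ∀ i, G.Adj (c i) (c (i + 1))) {x : V} {i : ZMod (2 * n + 1)} (hx : G.Adj x (c i)) :
    X x * ∏ j, (X (c j) : MvPolynomial V k) ∈ edgeIdeal k G ^ (n + 1) := by
  have hwalk : ∀ t : ℕ, G.Adj (c (i + ↑(t + 1))) (c (i + ↑(t + 1 + 1))) := fun t => by
    rw [Nat.cast_succ (t + 1), ← add_assoc]
    exact hc _
  rw [ZMod.prod_univ_eq_prod_range_add _ i, Finset.prod_range_succ', Nat.cast_zero, add_zero,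
    mul_comm _ (X (c i)), ← mul_assoc, pow_succ']
  exact Ideal.mul_mem_mul (X_mul_X_mem_edgeIdeal G hx) (prod_X_walk_mem_edgeIdeal_pow G hwalk n)

end EdgeIdeal

theorem stmt8_general (k : Type*) [Field k] {V : Type*} (G : SimpleGraph V)
    (n : ℕ)
    (c : ZMod (2 * n + 1) → V) (hc : IsInducedCycleMap G (2 * n + 1) c) :
    (∏ i : ZMod (2 * n + 1), X (c i) : MvPolynomial V k) ∉ edgeIdeal k G ^ (n + 1) ∧
    ∀ x : V, (∃ i, G.Adj x (c i)) →
      X x * (∏ i : ZMod (2 * n + 1), X (c i) : MvPolynomial V k) ∈ edgeIdeal k G ^ (n + 1) :=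
  ⟨prod_X_notMem_edgeIdeal_pow G _ c (by rw [Finset.card_univ, ZMod.card]; omega),
    fun _ ⟨_, hx⟩ => X_mul_prod_X_cycle_mem_edgeIdeal_pow G hc.1.2 hx⟩

/-- With smallest induced odd cycle `C` of length `2n+1` in a non-bipartite `G`:
`m_C ∉ I(G)^{n+1}` but `x·m_C ∈ I(G)^{n+1}` for every `x ∈ N_G(V(C))`. -/
theorem stmt8 (k : Type*) [Field k] {V : Type*} (G : SimpleGraph V)
    (hnb : ¬ G.Colorable 2) (n : ℕ)
    (hex : ∃ c : ZMod (2 * n + 1) → V, IsInducedCycleMap G (2 * n + 1) c)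
    (hmin : ∀ (m : ℕ) (c : ZMod (2 * m + 1) → V), IsInducedCycleMap G (2 * m + 1) c → n ≤ m)
    (c : ZMod (2 * n + 1) → V) (hc : IsInducedCycleMap G (2 * n + 1) c) :
    (∏ i : ZMod (2 * n + 1), X (c i) : MvPolynomial V k) ∉ edgeIdeal k G ^ (n + 1) ∧
    ∀ x : V, (∃ i, G.Adj x (c i)) →
      X x * (∏ i : ZMod (2 * n + 1), X (c i) : MvPolynomial V k) ∈ edgeIdeal k G ^ (n + 1) :=
  stmt8_general k G n c hc
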